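/- arXiv:1512.06547 — 2 statements merged into one kernel-verified Lean document; each statement's English description precedes it below -/
import Mathlib

section
/- Let k be a positive integer, Λ a finitely aligned k-graph, R a commutative ring with 1, and let KP_R(Λ) with Kumjian-Pask Λ-family {s_λ, s_{μ*}} be the universal Kumjian-Pask algebra of Λ over R. Suppose π : KP_R(Λ) → A is an R-algebra homomorphism into an R-algebra A such that π(r s_v) ≠ 0 for all r ∈ R\{0} and all v ∈ Λ^0. Then π is injective on the core KP_R(Λ)_0 := span_R{s_λ s_{μ*} : λ, μ ∈ Λ, d(λ) = d(μ)}. -/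
/-- A higher-rank graph (`k`-graph): a countable small category together with a degree
functor `d` into `ℕᵏ` satisfying the unique factorisation property.  The morphisms form the
type `Path`; the objects (vertices) are identified with the identity paths via `vertex`.
Composition `comp p q` is only meaningful when `src p = rng q`; all axioms are stated under
this compatibility assumption. -/
structure KGraph (k : ℕ) where
  Obj : Type
  Path : Type
  countable_obj : Countable Obj
  countable_path : Countable Path
  src : Path → Obj
  rng : Path → Obj
  vertex : Obj → Path
  comp : Path → Path → Path
  deg : Path → Fin k → ℕ
  src_vertex : ∀ v, src (vertex v) = v
  rng_vertex : ∀ v, rng (vertex v) = v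
  deg_vertex : ∀ v, deg (vertex v) = 0
  vertex_comp : ∀ p, comp (vertex (rng p)) p = p
  comp_vertex : ∀ p, comp p (vertex (src p)) = p
  src_comp : ∀ p q, src p = rng q → src (comp p q) = src q
  rng_comp : ∀ p q, src p = rng q → rng (comp p q) = rng p
  deg_comp : ∀ p q, src p = rng q → deg (comp p q) = deg p + deg q
  comp_assoc : ∀ p q r, src p = rng q → src q = rng r →
    comp (comp p q) r = comp p (comp q r)
  factorisation : ∀ (p : Path) (m n : Fin k → ℕ), deg p = m + n →
    ∃! x : Path × Path, src x.1 = rng x.2 ∧ deg x.1 = m ∧ deg x.2 = n ∧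
      comp x.1 x.2 = p

namespace KGraph

variable {k : ℕ} (Λ : KGraph k)

/-- `Λ^min(p,q)`: the pairs `(ρ,τ)` with `pρ = qτ` a minimal common extension of `p` and `q`. -/
def minPairs (p q : Λ.Path) : Set (Λ.Path × Λ.Path) :=
  {x | Λ.src p = Λ.rng x.1 ∧ Λ.src q = Λ.rng x.2 ∧
    Λ.comp p x.1 = Λ.comp q x.2 ∧
    Λ.deg (Λ.comp p x.1) = Λ.deg p ⊔ Λ.deg q}

/-- `MCE(p,q)`: minimal common extensions of `p` and `q`. -/
def MCE (p q : Λ.Path) : Set Λ.Path :=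
  {t | Λ.deg t = Λ.deg p ⊔ Λ.deg q ∧
    (∃ r, Λ.src p = Λ.rng r ∧ Λ.comp p r = t) ∧
    (∃ r, Λ.src q = Λ.rng r ∧ Λ.comp q r = t)}

/-- `Λ` is finitely aligned if all the sets `Λ^min(p,q)` are finite. -/
def FinitelyAligned : Prop := ∀ p q, (Λ.minPairs p q).Finite

/-- `E ⊆ vΛ` is exhaustive. -/
def Exhaustive (v : Λ.Obj) (E : Set Λ.Path) : Prop :=
  ∀ p, Λ.rng p = v → ∃ q ∈ E, (Λ.minPairs p q).Nonempty

/-- `E` is a finite exhaustive subset of `vΛ \ {v}`, i.e. an element of `FE(Λ)`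
with range vertex `v`. -/
def FE (v : Λ.Obj) (E : Set Λ.Path) : Prop :=
  E.Finite ∧ (∀ p ∈ E, Λ.rng p = v ∧ p ≠ Λ.vertex v) ∧ Λ.Exhaustive v E

/-- `Ext(p; E)`. -/
def extSet (p : Λ.Path) (E : Set Λ.Path) : Set Λ.Path :=
  ⋃ q ∈ E, {r | ∃ t, (r, t) ∈ Λ.minPairs p q}

section Family

variable {A : Type} [NonUnitalRing A]

/-- (KP1): the vertex elements are mutually orthogonal idempotents. -/
def KP1 (S : Λ.Path → A) : Prop :=
  (∀ v, S (Λ.vertex v) * S (Λ.vertex v) = S (Λ.vertex v)) ∧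
  ∀ v w, v ≠ w → S (Λ.vertex v) * S (Λ.vertex w) = 0

/-- (KP2): multiplicativity on composable paths and ghost paths.  Here `T μ` plays the
role of `S_{μ*}`. -/
def KP2 (S T : Λ.Path → A) : Prop :=
  ∀ p q, Λ.src p = Λ.rng q →
    S p * S q = S (Λ.comp p q) ∧ T q * T p = T (Λ.comp p q)

/-- (KP3): `S_{p*} S_q = ∑_{(ρ,τ) ∈ Λ^min(p,q)} S_ρ S_{τ*}` (empty sum read as `0`). -/
def KP3 (S T : Λ.Path → A) : Prop :=
  ∀ p q, T p * S q = ∑ᶠ x ∈ Λ.minPairs p q, S x.1 * T x.2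

/-- (KP4): `∏_{p ∈ E} (S_v - S_p S_{p*}) = 0` for every finite exhaustive
`E ⊆ vΛ \ {v}`.  The product is implemented as a fold over any duplicate-free list
enumerating `E`, with the harmless extra idempotent factor `S_v` in front. -/
def KP4 (S T : Λ.Path → A) : Prop :=
  ∀ (v : Λ.Obj) (l : List Λ.Path), l.Nodup → Λ.FE v {p | p ∈ l} →
    (l.map fun p => S (Λ.vertex v) - S p * T p).foldl (· * ·) (S (Λ.vertex v)) = 0

/-- A Kumjian–Pask `Λ`-family in a (not necessarily unital) ring: `S p` represents `s_p`
and `T p` represents the ghost element `s_{p*}`, with `T` and `S` agreeing on vertices. -/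
def IsKPFamily (S T : Λ.Path → A) : Prop :=
  (∀ v, T (Λ.vertex v) = S (Λ.vertex v)) ∧
  Λ.KP1 S ∧ Λ.KP2 S T ∧ Λ.KP3 S T ∧ Λ.KP4 S T

end Family

/-- `(B, s, t)` is *the* (universal) Kumjian–Pask algebra of `Λ` over `R`:
`(s, t)` is a Kumjian–Pask `Λ`-family generating `B`, and every Kumjian–Pask `Λ`-family
in an `R`-algebra `A` factors uniquely through it. -/
def IsUniversalKP (R : Type) [CommRing R] (B : Type) [NonUnitalRing B]
    [Module R B] [SMulCommClass R B B] [IsScalarTower R B B]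
    (s t : Λ.Path → B) : Prop :=
  Λ.IsKPFamily s t ∧
  NonUnitalAlgebra.adjoin R (Set.range s ∪ Set.range t) = ⊤ ∧
  ∀ (A : Type) [NonUnitalRing A] [Module R A] [SMulCommClass R A A]
    [IsScalarTower R A A] (S T : Λ.Path → A), Λ.IsKPFamily S T →
      ∃! π : B →ₙₐ[R] A, (∀ p, π (s p) = S p) ∧ (∀ p, π (t p) = T p)

/-- A boundary path of `Λ`: a degree-preserving functor `x : Ω_{k,m} → Λ`
(for `m = deg x ∈ (ℕ∪{∞})ᵏ`), recorded via its segments `seg p q = x(p,q)`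
for `p ≤ q ≤ m` (the value of `seg` outside this domain is junk), and satisfying
the boundary-path condition with respect to finite exhaustive sets. -/
structure BoundaryPath (Λ : KGraph k) where
  deg : Fin k → ℕ∞
  seg : (Fin k → ℕ) → (Fin k → ℕ) → Λ.Path
  deg_seg : ∀ p q, p ≤ q → (∀ i, (q i : ℕ∞) ≤ deg i) → Λ.deg (seg p q) = q - p
  seg_self : ∀ p, (∀ i, (p i : ℕ∞) ≤ deg i) →
    seg p p = Λ.vertex (Λ.src (seg p p))
  src_seg : ∀ p q r, p ≤ q → q ≤ r → (∀ i, (r i : ℕ∞) ≤ deg i) →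
    Λ.src (seg p q) = Λ.rng (seg q r)
  comp_seg : ∀ p q r, p ≤ q → q ≤ r → (∀ i, (r i : ℕ∞) ≤ deg i) →
    Λ.comp (seg p q) (seg q r) = seg p r
  boundary : ∀ n : Fin k → ℕ, (∀ i, (n i : ℕ∞) ≤ deg i) →
    ∀ E : Set Λ.Path, Λ.FE (Λ.src (seg n n)) E →
      ∃ p ∈ E, (∀ i, ((n + Λ.deg p) i : ℕ∞) ≤ deg i) ∧ seg n (n + Λ.deg p) = p

namespace BoundaryPath

variable {Λ : KGraph k}

/-- The vertex `x(n)` of a boundary path. -/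
def vtx (x : Λ.BoundaryPath) (n : Fin k → ℕ) : Λ.Obj := Λ.src (x.seg n n)

/-- The range `r(x) = x(0)` of a boundary path. -/
def rng (x : Λ.BoundaryPath) : Λ.Obj := x.vtx 0

end BoundaryPath

/-- `IsShift n x y` says that `y = σⁿ x` is the shift of the boundary path `x` by
`n ≤ d(x)`. -/
def IsShift (n : Fin k → ℕ) (x y : Λ.BoundaryPath) : Prop :=
  (∀ i, (n i : ℕ∞) ≤ x.deg i) ∧
  (∀ i, y.deg i = x.deg i - (n i : ℕ∞)) ∧
  ∀ p q, p ≤ q → (∀ i, (q i : ℕ∞) ≤ y.deg i) → y.seg p q = x.seg (n + p) (n + q)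

/-- `IsConcat p x y` says that `y = p·x` is the concatenation of the path `p` with the
boundary path `x` (so `y(0, d p) = p` and `σ^{d p} y = x`). -/
def IsConcat (p : Λ.Path) (x y : Λ.BoundaryPath) : Prop :=
  Λ.IsShift (Λ.deg p) y x ∧ y.seg 0 (Λ.deg p) = p

/-- A boundary path `x` is aperiodic if distinct paths with source `r(x)` give distinct
concatenations `p·x ≠ q·x`. -/
def AperiodicBP (x : Λ.BoundaryPath) : Prop :=
  ∀ p q, Λ.src p = x.rng → Λ.src q = x.rng → p ≠ q →
    ∀ y, Λ.IsConcat p x y → ¬Λ.IsConcat q x y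

/-- `Λ` is aperiodic: every vertex receives an aperiodic boundary path. -/
def Aperiodic : Prop :=
  ∀ v : Λ.Obj, ∃ x : Λ.BoundaryPath, x.rng = v ∧ Λ.AperiodicBP x

/-- `Λ` is cofinal: for every vertex `v` and boundary path `x` there is `n ≤ d(x)`
with `vΛx(n) ≠ ∅`. -/
def Cofinal : Prop :=
  ∀ (v : Λ.Obj) (x : Λ.BoundaryPath), ∃ n : Fin k → ℕ,
    (∀ i, (n i : ℕ∞) ≤ x.deg i) ∧ ∃ p, Λ.rng p = v ∧ Λ.src p = x.vtx n

/-- The boundary-path groupoid `G_Λ` as a set of triples `(x, m, y)` with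
`σᵖ x = σ^q y` and `m = p - q`. -/
def BPG : Set (Λ.BoundaryPath × (Fin k → ℤ) × Λ.BoundaryPath) :=
  {a | ∃ (p q : Fin k → ℕ) (z : Λ.BoundaryPath),
    (fun i => (p i : ℤ) - (q i : ℤ)) = a.2.1 ∧
    Λ.IsShift p a.1 z ∧ Λ.IsShift q a.2.2 z}

/-- `Z(p) = p ∂Λ`, the cylinder set of boundary paths with prefix `p`. -/
def ZC (p : Λ.Path) : Set Λ.BoundaryPath := {x | ∃ z, Λ.IsConcat p z x}

/-- `Z(p *ₛ q)`. -/
def ZP (p q : Λ.Path) : Set (Λ.BoundaryPath × (Fin k → ℤ) × Λ.BoundaryPath) :=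
  {a | a.2.1 = (fun i => (Λ.deg p i : ℤ) - (Λ.deg q i : ℤ)) ∧
    a.1 ∈ Λ.ZC p ∧ a.2.2 ∈ Λ.ZC q ∧
    ∃ z, Λ.IsShift (Λ.deg p) a.1 z ∧ Λ.IsShift (Λ.deg q) a.2.2 z}

/-- `Z(p *ₛ q \ G)`. -/
def ZPD (p q : Λ.Path) (G : Set Λ.Path) :
    Set (Λ.BoundaryPath × (Fin k → ℤ) × Λ.BoundaryPath) :=
  Λ.ZP p q \ ⋃ ν ∈ G, Λ.ZP (Λ.comp p ν) (Λ.comp q ν)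

/-- The boundary-path groupoid `G_Λ` as a type. -/
abbrev bpSpace : Type := {a // a ∈ Λ.BPG}

/-- The topology on `G_Λ` generated by the basic sets `Z(p *ₛ q \ G)` with `G` finite. -/
def bpTop : TopologicalSpace Λ.bpSpace :=
  TopologicalSpace.generateFrom
    {V | ∃ (p q : Λ.Path) (G : Set Λ.Path), Λ.src p = Λ.src q ∧
      (∀ ν ∈ G, Λ.rng ν = Λ.src p) ∧ G.Finite ∧
      V = Subtype.val ⁻¹' Λ.ZPD p q G}

theorem isShift_zero (x : Λ.BoundaryPath) : Λ.IsShift 0 x x :=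
  ⟨fun i => by simp, fun i => by simp, fun p q _ _ => by simp⟩

/-- The unit space `G_Λ^{(0)}` of the boundary-path groupoid. -/
def unitSet : Set Λ.bpSpace := {a | a.1.2.1 = 0 ∧ a.1.1 = a.1.2.2}

/-- The unit `(x, 0, x)` of `G_Λ` corresponding to a boundary path `x`. -/
def unitOf (x : Λ.BoundaryPath) : Λ.bpSpace :=
  ⟨(x, 0, x), ⟨0, 0, x, by funext i; simp, Λ.isShift_zero x, Λ.isShift_zero x⟩⟩

end KGraph

/-- The core `KP_R(Λ)_0 = span_R{s_p t_q : d(p) = d(q)}`. -/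
def kpCore {k : ℕ} (Λ : KGraph k) (R : Type) [CommRing R] {B : Type}
    [NonUnitalRing B] [Module R B] (s t : Λ.Path → B) : Submodule R B :=
  Submodule.span R {b | ∃ p q : Λ.Path, Λ.deg p = Λ.deg q ∧ b = s p * t q}

/-!
Fix a Kumjian–Pask family and a finite set `E` of paths closed under minimal common extensions;
finite alignment puts every finite set of paths inside one. For `τ ∈ E` with `v = s(τ)` let
`Q(τ) = s_v ∏ (s_v - s_ν s_ν^*)` over the `ν` of nonzero degree with `τν ∈ E` (`gapProj`), and
`Θ(σ,τ) = s_σ Q(τ) s_τ^*` (`theta`). Expanding the product and inducting downwards on `|d(τ)|`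
writes every `s_σ s_τ^*` with `d(σ) = d(τ)`, `τ ∈ E`, as a combination of the `Θ(σ,τ)`, and these
behave like matrix units: `s_{σ₀}^* Θ(σ,τ) s_{τ₀} Q(τ₀)` is `Q(τ₀)` if `(σ,τ) = (σ₀,τ₀)` and `0`
otherwise. So each coefficient `r` of an element of the core killed by `π` gives `π(r Q(τ)) = 0`.
Either the `ν` form an exhaustive set and `Q(τ) = 0` by (KP4), or some `ζ ∈ vΛ` has no common
extension with any of them; then `s_ζ^* Q(τ) s_ζ = s_{s(ζ)}`, and `π(r s_{s(ζ)}) = 0` forces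
`r = 0`. Either way `r Θ(σ,τ) = 0`.
-/

section GapProd

variable {B : Type*} [NonUnitalRing B]

/-- The idempotent `p` stands in for the missing unit: this is `∏ (1 - xᵢ)` computed in the
corner `p B p`. -/
def gapProd (p : B) (l : List B) : B := l.foldl (fun b x => b * (p - x)) p

variable {p : B}

theorem gapProd_append_singleton (l : List B) (x : B) :
    gapProd p (l ++ [x]) = gapProd p l * (p - x) := by
  simp [gapProd, List.foldl_append]

theorem mul_gapProd (hp : IsIdempotentElem p) (l : List B) : p * gapProd p l = gapProd p l := by
  induction l using List.reverseRecOn with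
  | nil => exact hp
  | append_singleton l x ih => rw [gapProd_append_singleton, ← mul_assoc, ih]

theorem gapProd_mul_self (hp : IsIdempotentElem p) {l : List B} (hl : ∀ x ∈ l, x * p = x) :
    gapProd p l * p = gapProd p l := by
  induction l using List.reverseRecOn with
  | nil => exact hp
  | append_singleton l x ih =>
    rw [gapProd_append_singleton, mul_assoc, sub_mul, hp.eq, hl x (by simp)]

theorem gapProd_mul_of_forall_mul_eq_zero {z : B} (hz : p * z = z) {l : List B}
    (hl : ∀ x ∈ l, x * z = 0) : gapProd p l * z = z := by
  induction l using List.reverseRecOn with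
  | nil => exact hz
  | append_singleton l x ih =>
    rw [gapProd_append_singleton, mul_assoc, sub_mul, hz, hl x (by simp), sub_zero,
      ih fun y hy => hl y (by simp [hy])]

theorem Commute.gapProd_right {y : B} (hp : Commute y p) {l : List B}
    (hl : ∀ x ∈ l, Commute y x) : Commute y (gapProd p l) := by
  induction l using List.reverseRecOn with
  | nil => exact hp
  | append_singleton l x ih =>
    rw [gapProd_append_singleton]
    exact (ih fun z hz => hl z (by simp [hz])).mul_right (hp.sub_right (hl x (by simp)))

theorem gapProd_mul_eq_zero_of_mem {l : List B} {x : B} (hx : x ∈ l) (hxx : IsIdempotentElem x)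
    (hpx : p * x = x) (hxp : Commute x p) (hl : ∀ y ∈ l, Commute x y) :
    gapProd p l * x = 0 := by
  induction l using List.reverseRecOn with
  | nil => simp at hx
  | append_singleton l y ih =>
    rw [gapProd_append_singleton, mul_assoc]
    rcases List.mem_append.1 hx with hx | hx
    · rw [← (hxp.sub_right (hl y (by simp))).eq, ← mul_assoc,
        ih hx fun z hz => hl z (by simp [hz]), zero_mul]
    · obtain rfl := List.mem_singleton.1 hx
      rw [sub_mul, hpx, hxx.eq, sub_self, mul_zero]

theorem isIdempotentElem_gapProd (hp : IsIdempotentElem p) {l : List B}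
    (hl : ∀ x ∈ l, IsIdempotentElem x ∧ p * x = x ∧ x * p = x)
    (hc : ∀ x ∈ l, ∀ y ∈ l, Commute x y) : IsIdempotentElem (gapProd p l) := by
  induction l using List.reverseRecOn with
  | nil => exact hp
  | append_singleton l x ih =>
    obtain ⟨hxx, hpx, hxp⟩ := hl x (by simp)
    have hcomm : Commute (p - x) (gapProd p l) := by
      refine Commute.gapProd_right ?_ fun y hy => ?_
      · exact (Commute.refl p).sub_left (hxp.trans hpx.symm)
      · obtain ⟨-, hpy, hyp⟩ := hl y (by simp [hy])
        exact Commute.sub_left (hpy.trans hyp.symm) (hc x (by simp) y (by simp [hy]))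
    have hgap : IsIdempotentElem (p - x) := by
      rw [IsIdempotentElem, sub_mul, mul_sub, mul_sub, hp.eq, hpx, hxp, hxx.eq]
      abel
    rw [gapProd_append_singleton]
    refine (ih (fun y hy => hl y (by simp [hy])) fun y hy z hz => ?_).mul_of_commute
      hcomm.symm hgap
    exact hc y (by simp [hy]) z (by simp [hz])

end GapProd

namespace KGraph

variable {k : ℕ} {Λ : KGraph k}

section Paths

theorem eq_vertex_of_deg_eq_zero {p : Λ.Path} (h : Λ.deg p = 0) :
    p = Λ.vertex (Λ.rng p) := by
  obtain ⟨x, -, hx⟩ := Λ.factorisation p 0 0 (by simpa using h)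
  have h₁ : (Λ.vertex (Λ.rng p), p) = x :=
    hx _ ⟨by rw [Λ.src_vertex], Λ.deg_vertex _, h, Λ.vertex_comp p⟩
  have h₂ : (p, Λ.vertex (Λ.src p)) = x :=
    hx _ ⟨by rw [Λ.rng_vertex], h, Λ.deg_vertex _, Λ.comp_vertex p⟩
  exact congrArg Prod.fst (h₂.trans h₁.symm)

theorem comp_cancel_left {p a b : Λ.Path} (ha : Λ.src p = Λ.rng a) (hb : Λ.src p = Λ.rng b)
    (hd : Λ.deg a = Λ.deg b) (h : Λ.comp p a = Λ.comp p b) : a = b := by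
  obtain ⟨x, -, hx⟩ := Λ.factorisation (Λ.comp p a) (Λ.deg p) (Λ.deg a) (Λ.deg_comp p a ha)
  exact congrArg Prod.snd
    ((hx (p, a) ⟨ha, rfl, rfl, rfl⟩).trans (hx (p, b) ⟨hb, rfl, hd.symm, h.symm⟩).symm)

theorem eq_vertex_of_deg_comp_eq {p ρ : Λ.Path} (h : Λ.src p = Λ.rng ρ)
    (hd : Λ.deg (Λ.comp p ρ) = Λ.deg p) : ρ = Λ.vertex (Λ.src p) := by
  rw [Λ.deg_comp p ρ h, add_eq_left] at hd
  rw [h]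
  exact eq_vertex_of_deg_eq_zero hd

theorem comp_eq_self_of_deg_comp_eq {p ρ : Λ.Path} (h : Λ.src p = Λ.rng ρ)
    (hd : Λ.deg (Λ.comp p ρ) = Λ.deg p) : Λ.comp p ρ = p := by
  rw [eq_vertex_of_deg_comp_eq h hd, Λ.comp_vertex]

theorem minPairs_self (p : Λ.Path) :
    Λ.minPairs p p = {(Λ.vertex (Λ.src p), Λ.vertex (Λ.src p))} := by
  ext ⟨ρ, τ⟩
  simp only [minPairs, sup_idem, Set.mem_ofPred_eq, Set.mem_singleton_iff, Prod.mk.injEq]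
  constructor
  · rintro ⟨hρ, hτ, heq, hd⟩
    exact ⟨eq_vertex_of_deg_comp_eq hρ hd, eq_vertex_of_deg_comp_eq hτ (heq ▸ hd)⟩
  · rintro ⟨rfl, rfl⟩
    simp [Λ.rng_vertex, Λ.comp_vertex]

theorem minPairs_eq_empty_of_deg_eq {p q : Λ.Path} (hd : Λ.deg p = Λ.deg q) (hne : p ≠ q) :
    Λ.minPairs p q = ∅ := by
  refine Set.eq_empty_of_forall_notMem fun x ⟨hρ, hτ, heq, hdeg⟩ => hne ?_
  rw [← hd, sup_idem] at hdeg
  calc p = Λ.comp p x.1 := (comp_eq_self_of_deg_comp_eq hρ hdeg).symm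
    _ = Λ.comp q x.2 := heq
    _ = q := comp_eq_self_of_deg_comp_eq hτ (by rw [← heq, hdeg, hd])

theorem swap_mem_minPairs {p q : Λ.Path} {x : Λ.Path × Λ.Path} (hx : x ∈ Λ.minPairs p q) :
    x.swap ∈ Λ.minPairs q p := by
  obtain ⟨h₁, h₂, h₃, h₄⟩ := hx
  refine ⟨h₂, h₁, h₃.symm, ?_⟩
  simp only [Prod.fst_swap]
  rw [← h₃, h₄, sup_comm]

theorem minPairs_eq_empty_comm {p q : Λ.Path} (h : Λ.minPairs p q = ∅) :
    Λ.minPairs q p = ∅ :=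
  Set.eq_empty_of_forall_notMem fun _ hx => Set.notMem_empty _ (h ▸ swap_mem_minPairs hx)

theorem MCE_finite (hΛ : Λ.FinitelyAligned) (p q : Λ.Path) : (Λ.MCE p q).Finite := by
  refine ((hΛ p q).image fun x => Λ.comp p x.1).subset ?_
  rintro t ⟨hdeg, ⟨r, hr, rfl⟩, ⟨r', hr', heq⟩⟩
  exact ⟨(r, r'), ⟨hr, hr', heq.symm, hdeg⟩, rfl⟩

theorem MCE_comm (p q : Λ.Path) : Λ.MCE p q = Λ.MCE q p := by
  ext t
  simp only [MCE, sup_comm, Set.mem_ofPred_eq]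
  tauto

theorem comp_mem_MCE {p q : Λ.Path} {x : Λ.Path × Λ.Path} (hx : x ∈ Λ.minPairs p q) :
    Λ.comp p x.1 ∈ Λ.MCE p q :=
  ⟨hx.2.2.2, ⟨x.1, hx.1, rfl⟩, ⟨x.2, hx.2.1, hx.2.2.1.symm⟩⟩

variable (Λ) in
def degSum (p : Λ.Path) : ℕ := ∑ i, Λ.deg p i

theorem degSum_comp {p q : Λ.Path} (h : Λ.src p = Λ.rng q) :
    Λ.degSum (Λ.comp p q) = Λ.degSum p + Λ.degSum q := by
  simp only [degSum, Λ.deg_comp p q h, Pi.add_apply, Finset.sum_add_distrib]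

theorem degSum_eq_zero {p : Λ.Path} : Λ.degSum p = 0 ↔ Λ.deg p = 0 := by
  simp only [degSum, Finset.sum_eq_zero_iff, Finset.mem_univ, true_implies, funext_iff,
    Pi.zero_apply]

theorem eq_of_mem_MCE_of_degSum_le {p q t : Λ.Path} (ht : t ∈ Λ.MCE p q)
    (h : Λ.degSum t ≤ Λ.degSum p) : t = p := by
  obtain ⟨-, ⟨r, hr, rfl⟩, -⟩ := ht
  rw [degSum_comp hr] at h
  have hr₀ : Λ.deg r = 0 := degSum_eq_zero.1 (by omega)
  rw [eq_vertex_of_deg_eq_zero hr₀, ← hr, Λ.comp_vertex]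

end Paths

section MCEClosure

def IsMCEClosed (E : Set Λ.Path) : Prop := ∀ p ∈ E, ∀ q ∈ E, Λ.MCE p q ⊆ E

inductive MCEClosure (F : Set Λ.Path) : Λ.Path → Prop
  | of_mem {p : Λ.Path} : p ∈ F → MCEClosure F p
  | of_mem_MCE {p q t : Λ.Path} :
      MCEClosure F p → MCEClosure F q → t ∈ Λ.MCE p q → MCEClosure F t

theorem MCEClosure.deg_le {F : Finset Λ.Path} {t : Λ.Path} (ht : MCEClosure (F : Set Λ.Path) t) :
    Λ.deg t ≤ F.sup Λ.deg := by
  induction ht with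
  | of_mem hp => exact Finset.le_sup hp
  | of_mem_MCE _ _ ht ihp ihq => rw [ht.1]; exact sup_le ihp ihq

theorem finite_setOf_MCEClosure (hΛ : Λ.FinitelyAligned) (F : Finset Λ.Path) :
    {t | MCEClosure (F : Set Λ.Path) t}.Finite := by
  -- a new minimal common extension is strictly longer than the paths it extends
  have hshort : ∀ m, {t | MCEClosure (F : Set Λ.Path) t ∧ Λ.degSum t < m}.Finite := by
    intro m
    induction m with
    | zero => simp
    | succ m ih =>
      refine (F.finite_toSet.union (ih.biUnion fun p _ =>
        ih.biUnion fun q _ => MCE_finite hΛ p q)).subset ?_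
      rintro t ⟨ht, htm⟩
      replace htm : Λ.degSum t ≤ m := by omega
      induction ht with
      | of_mem hp => exact Or.inl hp
      | @of_mem_MCE p q t hp hq ht ihp ihq =>
        by_cases hpt : Λ.degSum t ≤ Λ.degSum p
        · obtain rfl := eq_of_mem_MCE_of_degSum_le ht hpt
          exact ihp htm
        by_cases hqt : Λ.degSum t ≤ Λ.degSum q
        · obtain rfl := eq_of_mem_MCE_of_degSum_le (MCE_comm p q ▸ ht) hqt
          exact ihq htm
        refine Or.inr (Set.mem_biUnion ⟨hp, ?_⟩ (Set.mem_biUnion ⟨hq, ?_⟩ ht)) <;> omega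
  refine (hshort (∑ i, F.sup Λ.deg i + 1)).subset fun t ht => ⟨ht, ?_⟩
  have := Finset.sum_le_sum fun i (_ : i ∈ Finset.univ) => ht.deg_le i
  exact Nat.lt_succ_of_le this

theorem exists_finset_superset_isMCEClosed (hΛ : Λ.FinitelyAligned) (F : Finset Λ.Path) :
    ∃ E : Finset Λ.Path, F ⊆ E ∧ IsMCEClosed (E : Set Λ.Path) := by
  refine ⟨(finite_setOf_MCEClosure hΛ F).toFinset, fun p hp => ?_, fun p hp q hq t ht => ?_⟩
  · simpa using MCEClosure.of_mem (F := (F : Set Λ.Path)) hp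
  · simp only [Set.Finite.coe_toFinset, Set.mem_ofPred_eq] at hp hq ⊢
    exact .of_mem_MCE hp hq ht

end MCEClosure

namespace IsKPFamily

variable {B : Type} [NonUnitalRing B] {S T : Λ.Path → B} (hF : Λ.IsKPFamily S T)
include hF

theorem S_comp {p q : Λ.Path} (h : Λ.src p = Λ.rng q) : S p * S q = S (Λ.comp p q) :=
  (hF.2.2.1 p q h).1

theorem T_comp {p q : Λ.Path} (h : Λ.src p = Λ.rng q) : T q * T p = T (Λ.comp p q) :=
  (hF.2.2.1 p q h).2

theorem S_vertex_mul_self (v : Λ.Obj) : S (Λ.vertex v) * S (Λ.vertex v) = S (Λ.vertex v) :=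
  hF.2.1.1 v

theorem S_vertex_mul_S {p : Λ.Path} {v : Λ.Obj} (h : Λ.rng p = v) :
    S (Λ.vertex v) * S p = S p := by
  rw [← h, hF.S_comp (Λ.src_vertex _), Λ.vertex_comp]

theorem S_mul_S_vertex {p : Λ.Path} {v : Λ.Obj} (h : Λ.src p = v) :
    S p * S (Λ.vertex v) = S p := by
  rw [← h, hF.S_comp (Λ.rng_vertex _).symm, Λ.comp_vertex]

theorem T_mul_S_vertex {p : Λ.Path} {v : Λ.Obj} (h : Λ.rng p = v) :
    T p * S (Λ.vertex v) = T p := by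
  rw [← h, ← hF.1, hF.T_comp (Λ.src_vertex _), Λ.vertex_comp]

theorem S_vertex_mul_T {p : Λ.Path} {v : Λ.Obj} (h : Λ.src p = v) :
    S (Λ.vertex v) * T p = T p := by
  rw [← h, ← hF.1, hF.T_comp (Λ.rng_vertex _).symm, Λ.comp_vertex]

theorem T_mul_S_eq_zero_of_minPairs_eq_empty {p q : Λ.Path} (h : Λ.minPairs p q = ∅) :
    T p * S q = 0 := by
  rw [hF.2.2.2.1 p q, h, finsum_mem_empty]

theorem T_mul_S_eq_zero_of_deg_eq {p q : Λ.Path} (hd : Λ.deg p = Λ.deg q) (hne : p ≠ q) :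
    T p * S q = 0 :=
  hF.T_mul_S_eq_zero_of_minPairs_eq_empty (minPairs_eq_empty_of_deg_eq hd hne)

theorem T_mul_S_self (p : Λ.Path) : T p * S p = S (Λ.vertex (Λ.src p)) := by
  rw [hF.2.2.2.1 p p, minPairs_self, finsum_mem_singleton, hF.1, hF.S_vertex_mul_self]

theorem T_mul_S_comp {τ ν : Λ.Path} (h : Λ.src τ = Λ.rng ν) : T τ * S (Λ.comp τ ν) = S ν := by
  rw [← hF.S_comp h, ← mul_assoc, hF.T_mul_S_self, hF.S_vertex_mul_S h.symm]

theorem S_mul_T_eq_zero_of_src_ne {p q : Λ.Path} (h : Λ.src p ≠ Λ.src q) : S p * T q = 0 := by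
  rw [← hF.S_mul_S_vertex rfl, ← hF.S_vertex_mul_T (p := q) rfl, mul_assoc,
    ← mul_assoc (S (Λ.vertex _)), hF.2.1.2 _ _ h, zero_mul, mul_zero]

theorem isIdempotentElem_S_mul_T (p : Λ.Path) : IsIdempotentElem (S p * T p) := by
  rw [IsIdempotentElem, mul_assoc, ← mul_assoc (T p), hF.T_mul_S_self, hF.S_vertex_mul_T rfl]

theorem S_vertex_mul_S_mul_T {p : Λ.Path} {v : Λ.Obj} (h : Λ.rng p = v) :
    S (Λ.vertex v) * (S p * T p) = S p * T p := by
  rw [← mul_assoc, hF.S_vertex_mul_S h]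

theorem S_mul_T_mul_S_vertex {p : Λ.Path} {v : Λ.Obj} (h : Λ.rng p = v) :
    S p * T p * S (Λ.vertex v) = S p * T p := by
  rw [mul_assoc, hF.T_mul_S_vertex h]

variable (hΛ : Λ.FinitelyAligned)
include hΛ

theorem T_mul_S_eq_sum (p q : Λ.Path) :
    T p * S q = ∑ x ∈ (hΛ p q).toFinset, S x.1 * T x.2 := by
  rw [hF.2.2.2.1 p q, finsum_mem_eq_finite_toFinset_sum _ (hΛ p q)]

theorem S_mul_T_mul_S_mul_T {α β γ δ : Λ.Path} (hαβ : Λ.src α = Λ.src β)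
    (hγδ : Λ.src γ = Λ.src δ) :
    S α * T β * (S γ * T δ) =
      ∑ x ∈ (hΛ β γ).toFinset, S (Λ.comp α x.1) * T (Λ.comp δ x.2) := by
  rw [mul_assoc, ← mul_assoc (T β), hF.T_mul_S_eq_sum hΛ, Finset.sum_mul, Finset.mul_sum]
  refine Finset.sum_congr rfl fun x hx => ?_
  obtain ⟨h₁, h₂, -, -⟩ := (Set.Finite.mem_toFinset _).1 hx
  rw [mul_assoc, ← mul_assoc (S α), hF.S_comp (hαβ.trans h₁), hF.T_comp (hγδ.symm.trans h₂)]

theorem commute_S_mul_T (p q : Λ.Path) : Commute (S p * T p) (S q * T q) := by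
  rw [Commute, SemiconjBy, hF.S_mul_T_mul_S_mul_T hΛ rfl rfl, hF.S_mul_T_mul_S_mul_T hΛ rfl rfl]
  refine Finset.sum_nbij' Prod.swap Prod.swap (fun x hx => ?_) (fun x hx => ?_) (by simp)
    (by simp) fun x hx => ?_
  · simpa using swap_mem_minPairs ((Set.Finite.mem_toFinset _).1 hx)
  · simpa using swap_mem_minPairs ((Set.Finite.mem_toFinset _).1 hx)
  · rw [Prod.fst_swap, Prod.snd_swap, ((Set.Finite.mem_toFinset _).1 hx).2.2.1]

end IsKPFamily

section GapProj

variable {B : Type} [NonUnitalRing B]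

def properExts (E : Finset Λ.Path) (τ : Λ.Path) : Set Λ.Path :=
  {ν | Λ.src τ = Λ.rng ν ∧ Λ.deg ν ≠ 0 ∧ Λ.comp τ ν ∈ E}

theorem properExts_finite (E : Finset Λ.Path) (τ : Λ.Path) : (properExts E τ).Finite := by
  refine Set.Finite.of_finite_image (f := Λ.comp τ) (E.finite_toSet.subset ?_) fun a ha b hb h => ?_
  · rintro _ ⟨ν, hν, rfl⟩
    exact hν.2.2
  · refine comp_cancel_left ha.1 hb.1 ?_ h
    have hd := congrArg Λ.deg h
    rwa [Λ.deg_comp _ _ ha.1, Λ.deg_comp _ _ hb.1, add_right_inj] at hd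

noncomputable def properExtList (E : Finset Λ.Path) (τ : Λ.Path) : List Λ.Path :=
  (properExts_finite E τ).toFinset.toList

theorem mem_properExtList {E : Finset Λ.Path} {τ ν : Λ.Path} :
    ν ∈ properExtList E τ ↔ ν ∈ properExts E τ := by
  rw [properExtList, Finset.mem_toList, Set.Finite.mem_toFinset]

noncomputable def gapProj (S T : Λ.Path → B) (E : Finset Λ.Path) (τ : Λ.Path) : B :=
  gapProd (S (Λ.vertex (Λ.src τ))) ((properExtList E τ).map fun ν => S ν * T ν)

noncomputable def theta (S T : Λ.Path → B) (E : Finset Λ.Path) (σ τ : Λ.Path) : B :=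
  S σ * gapProj S T E τ * T τ

variable {S T : Λ.Path → B} {E : Finset Λ.Path}

namespace IsKPFamily

variable (hF : Λ.IsKPFamily S T)
include hF

theorem gapProj_eq_zero {τ : Λ.Path} (hex : Λ.Exhaustive (Λ.src τ) (properExts E τ)) :
    gapProj S T E τ = 0 := by
  have hFE : Λ.FE (Λ.src τ) {p | p ∈ properExtList E τ} := by
    rw [show {p | p ∈ properExtList E τ} = properExts E τ from
      Set.ext fun _ => mem_properExtList]
    refine ⟨properExts_finite E τ, fun p hp => ⟨hp.1.symm, fun h => hp.2.1 ?_⟩, hex⟩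
    rw [h, Λ.deg_vertex]
  have hKP4 := hF.2.2.2.2 _ _ (Finset.nodup_toList _) hFE
  rw [List.foldl_map] at hKP4
  rwa [gapProj, gapProd, List.foldl_map]

theorem S_vertex_mul_gapProj (τ : Λ.Path) :
    S (Λ.vertex (Λ.src τ)) * gapProj S T E τ = gapProj S T E τ :=
  mul_gapProd (hF.S_vertex_mul_self _) _

theorem gapProj_mul_S_vertex (τ : Λ.Path) :
    gapProj S T E τ * S (Λ.vertex (Λ.src τ)) = gapProj S T E τ := by
  refine gapProd_mul_self (hF.S_vertex_mul_self _) ?_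
  simp only [List.forall_mem_map]
  exact fun ν hν => hF.S_mul_T_mul_S_vertex (mem_properExtList.1 hν).1.symm

theorem T_mul_gapProj_mul_S {τ ζ : Λ.Path} (hζ : Λ.rng ζ = Λ.src τ)
    (hmin : ∀ ν ∈ properExts E τ, Λ.minPairs ζ ν = ∅) :
    T ζ * gapProj S T E τ * S ζ = S (Λ.vertex (Λ.src ζ)) := by
  rw [mul_assoc, gapProj, gapProd_mul_of_forall_mul_eq_zero (hF.S_vertex_mul_S hζ), hF.T_mul_S_self]
  simp only [List.forall_mem_map]
  intro ν hν
  rw [mul_assoc, hF.T_mul_S_eq_zero_of_minPairs_eq_empty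
    (minPairs_eq_empty_comm (hmin ν (mem_properExtList.1 hν))), mul_zero]

variable (hΛ : Λ.FinitelyAligned)
include hΛ

theorem isIdempotentElem_gapProj (τ : Λ.Path) : IsIdempotentElem (gapProj S T E τ) := by
  refine isIdempotentElem_gapProd (hF.S_vertex_mul_self _) ?_ ?_
  · simp only [List.forall_mem_map]
    intro ν hν
    have hr := (mem_properExtList.1 hν).1.symm
    exact ⟨hF.isIdempotentElem_S_mul_T ν, hF.S_vertex_mul_S_mul_T hr, hF.S_mul_T_mul_S_vertex hr⟩
  · simp only [List.forall_mem_map]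
    exact fun ν _ μ _ => hF.commute_S_mul_T hΛ ν μ

theorem commute_S_mul_T_gapProj {ν τ : Λ.Path} (hν : Λ.rng ν = Λ.src τ) :
    Commute (S ν * T ν) (gapProj S T E τ) := by
  refine Commute.gapProd_right ?_ ?_
  · exact (hF.S_mul_T_mul_S_vertex hν).trans (hF.S_vertex_mul_S_mul_T hν).symm
  · simp only [List.forall_mem_map]
    exact fun μ _ => hF.commute_S_mul_T hΛ ν μ

theorem gapProj_mul_S_mul_T_eq_zero {ν τ : Λ.Path} (hν : ν ∈ properExts E τ) :
    gapProj S T E τ * (S ν * T ν) = 0 := by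
  refine gapProd_mul_eq_zero_of_mem (List.mem_map_of_mem (mem_properExtList.2 hν))
    (hF.isIdempotentElem_S_mul_T ν) (hF.S_vertex_mul_S_mul_T hν.1.symm) ?_ ?_
  · exact (hF.S_mul_T_mul_S_vertex hν.1.symm).trans (hF.S_vertex_mul_S_mul_T hν.1.symm).symm
  · simp only [List.forall_mem_map]
    exact fun μ _ => hF.commute_S_mul_T hΛ ν μ

theorem gapProj_mul_S_eq_zero {ν τ : Λ.Path} (hν : ν ∈ properExts E τ) :
    gapProj S T E τ * S ν = 0 := by
  calc gapProj S T E τ * S ν = gapProj S T E τ * (S ν * T ν) * S ν := by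
        rw [mul_assoc, mul_assoc, hF.T_mul_S_self, hF.S_mul_S_vertex rfl]
    _ = 0 := by rw [hF.gapProj_mul_S_mul_T_eq_zero hΛ hν, zero_mul]

theorem T_mul_gapProj_eq_zero {ν τ : Λ.Path} (hν : ν ∈ properExts E τ) :
    T ν * gapProj S T E τ = 0 := by
  calc T ν * gapProj S T E τ = T ν * (S ν * T ν * gapProj S T E τ) := by
        rw [← mul_assoc, ← mul_assoc, hF.T_mul_S_self, hF.S_vertex_mul_T rfl]
    _ = 0 := by
        rw [(hF.commute_S_mul_T_gapProj hΛ hν.1.symm).eq, hF.gapProj_mul_S_mul_T_eq_zero hΛ hν,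
          mul_zero]

theorem gapProj_mul_T_mul_S_mul_gapProj_self (τ : Λ.Path) :
    gapProj S T E τ * (T τ * S τ) * gapProj S T E τ = gapProj S T E τ := by
  rw [hF.T_mul_S_self, hF.gapProj_mul_S_vertex, (hF.isIdempotentElem_gapProj hΛ τ).eq]

theorem gapProj_mul_T_mul_S_mul_gapProj_of_ne (hE : IsMCEClosed (E : Set Λ.Path))
    {τ τ₀ : Λ.Path} (hτ : τ ∈ E) (hτ₀ : τ₀ ∈ E) (hne : τ ≠ τ₀) :
    gapProj S T E τ * (T τ * S τ₀) * gapProj S T E τ₀ = 0 := by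
  rw [hF.T_mul_S_eq_sum hΛ, Finset.mul_sum, Finset.sum_mul]
  refine Finset.sum_eq_zero fun x hx => ?_
  have hx' := (Set.Finite.mem_toFinset _).1 hx
  obtain ⟨h₁, h₂, h₃, -⟩ := id hx'
  by_cases hd : Λ.deg x.1 = 0
  · have hτx : τ = Λ.comp τ₀ x.2 := by
      rw [← h₃, eq_vertex_of_deg_eq_zero hd, ← h₁, Λ.comp_vertex]
    have hx₂ : x.2 ∈ properExts E τ₀ := by
      refine ⟨h₂, fun h0 => hne ?_, hτx ▸ hτ⟩
      rw [hτx, eq_vertex_of_deg_eq_zero h0, ← h₂, Λ.comp_vertex]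
    rw [mul_assoc, mul_assoc, hF.T_mul_gapProj_eq_zero hΛ hx₂, mul_zero, mul_zero]
  · have hx₁ : x.1 ∈ properExts E τ := ⟨h₁, hd, hE τ hτ τ₀ hτ₀ (comp_mem_MCE hx')⟩
    rw [← mul_assoc, hF.gapProj_mul_S_eq_zero hΛ hx₁, zero_mul, zero_mul]

end IsKPFamily

end GapProj

section Theta

variable {B : Type} [NonUnitalRing B] {S T : Λ.Path → B} {E : Finset Λ.Path}

def thetaIndex (E : Finset Λ.Path) : Set (Λ.Path × Λ.Path) :=
  {x | Λ.deg x.1 = Λ.deg x.2 ∧ Λ.src x.1 = Λ.src x.2 ∧ x.2 ∈ E}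

def thetaSpan (R : Type) [CommRing R] [Module R B] (S T : Λ.Path → B) (E : Finset Λ.Path) :
    Submodule R B :=
  Submodule.span R ((fun x => theta S T E x.1 x.2) '' thetaIndex E)

theorem IsKPFamily.T_mul_theta_mul_S_mul_gapProj_self (hF : Λ.IsKPFamily S T)
    (hΛ : Λ.FinitelyAligned) {x : Λ.Path × Λ.Path} (hx : x ∈ thetaIndex E) :
    T x.1 * theta S T E x.1 x.2 * (S x.2 * gapProj S T E x.2) = gapProj S T E x.2 := by
  calc T x.1 * theta S T E x.1 x.2 * (S x.2 * gapProj S T E x.2)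
      = T x.1 * S x.1 * (gapProj S T E x.2 * (T x.2 * S x.2) * gapProj S T E x.2) := by
        simp only [theta, mul_assoc]
    _ = gapProj S T E x.2 := by
        rw [hF.gapProj_mul_T_mul_S_mul_gapProj_self hΛ, hF.T_mul_S_self, hx.2.1,
          hF.S_vertex_mul_gapProj]

theorem IsKPFamily.T_mul_theta_mul_S_mul_gapProj_of_ne (hF : Λ.IsKPFamily S T)
    (hΛ : Λ.FinitelyAligned) (hE : IsMCEClosed (E : Set Λ.Path)) {x y : Λ.Path × Λ.Path}
    (hx : x ∈ thetaIndex E) (hy : y ∈ thetaIndex E) (hne : x ≠ y) :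
    T y.1 * theta S T E x.1 x.2 * (S y.2 * gapProj S T E y.2) = 0 := by
  calc T y.1 * theta S T E x.1 x.2 * (S y.2 * gapProj S T E y.2)
      = T y.1 * S x.1 * (gapProj S T E x.2 * (T x.2 * S y.2) * gapProj S T E y.2) := by
        simp only [theta, mul_assoc]
    _ = 0 := by
      by_cases hτ : x.2 = y.2
      · have hσ : y.1 ≠ x.1 := fun h => hne (Prod.ext h.symm hτ)
        rw [hF.T_mul_S_eq_zero_of_deg_eq (by rw [hy.1, ← hτ, ← hx.1]) hσ, zero_mul]
      · rw [hF.gapProj_mul_T_mul_S_mul_gapProj_of_ne hΛ hE hx.2.2 hy.2.2 hτ, mul_zero]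

variable {R : Type} [CommRing R] [Module R B] [SMulCommClass R B B] [IsScalarTower R B B]
  {A : Type} [NonUnitalRing A] [Module R A]

theorem IsKPFamily.smul_gapProj_eq_zero (hF : Λ.IsKPFamily S T) (π : B →ₙₐ[R] A)
    (hπ : ∀ r : R, r ≠ 0 → ∀ v, π (r • S (Λ.vertex v)) ≠ 0) {τ : Λ.Path} {r : R}
    (h : π (r • gapProj S T E τ) = 0) : r • gapProj S T E τ = 0 := by
  by_cases hex : Λ.Exhaustive (Λ.src τ) (properExts E τ)
  · rw [hF.gapProj_eq_zero hex, smul_zero]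
  obtain ⟨ζ, hζ, hmin⟩ : ∃ ζ, Λ.rng ζ = Λ.src τ ∧ ∀ ν ∈ properExts E τ, Λ.minPairs ζ ν = ∅ := by
    simpa [Exhaustive, Set.not_nonempty_iff_eq_empty] using hex
  by_cases hr : r = 0
  · rw [hr, zero_smul]
  refine absurd ?_ (hπ r hr (Λ.src ζ))
  rw [← hF.T_mul_gapProj_mul_S hζ hmin, ← smul_mul_assoc, ← mul_smul_comm, map_mul, map_mul, h,
    mul_zero, zero_mul]

theorem IsKPFamily.eq_zero_of_mem_thetaSpan (hF : Λ.IsKPFamily S T) (hΛ : Λ.FinitelyAligned)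
    (hE : IsMCEClosed (E : Set Λ.Path)) (π : B →ₙₐ[R] A)
    (hπ : ∀ r : R, r ≠ 0 → ∀ v, π (r • S (Λ.vertex v)) ≠ 0) {a : B}
    (ha : a ∈ thetaSpan R S T E) (hπa : π a = 0) : a = 0 := by
  obtain ⟨l, hl, rfl⟩ := (Finsupp.mem_span_image_iff_linearCombination R).1 ha
  rw [Finsupp.linearCombination_apply] at hπa ⊢
  have hcoef : ∀ y ∈ l.support, l y • gapProj S T E y.2 = 0 := by
    intro y hy
    have hcompress : T y.1 * l.sum (fun x c => c • theta S T E x.1 x.2) *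
        (S y.2 * gapProj S T E y.2) = l y • gapProj S T E y.2 := by
      rw [Finsupp.sum, Finset.mul_sum, Finset.sum_mul, Finset.sum_eq_single y]
      · rw [mul_smul_comm, smul_mul_assoc, hF.T_mul_theta_mul_S_mul_gapProj_self hΛ (hl hy)]
      · intro x hx hxy
        rw [mul_smul_comm, smul_mul_assoc,
          hF.T_mul_theta_mul_S_mul_gapProj_of_ne hΛ hE (hl hx) (hl hy) hxy, smul_zero]
      · exact fun hy' => absurd hy hy'
    refine hF.smul_gapProj_eq_zero π hπ ?_
    rw [← hcompress, map_mul, map_mul, hπa, mul_zero, zero_mul]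
  refine Finset.sum_eq_zero fun x hx => ?_
  change l x • theta S T E x.1 x.2 = 0
  rw [theta, ← smul_mul_assoc, ← mul_smul_comm, hcoef x hx, mul_zero, zero_mul]

end Theta

section Expansion

variable {B : Type} [NonUnitalRing B] {S T : Λ.Path → B} {E : Finset Λ.Path}
  {R : Type} [CommRing R] [Module R B] [IsScalarTower R B B]

def extSpan (R : Type) [CommRing R] [Module R B] (S T : Λ.Path → B) (E : Finset Λ.Path)
    (σ τ : Λ.Path) : Submodule R B :=
  Submodule.span R ((fun ω => S (Λ.comp σ ω) * T (Λ.comp τ ω)) '' properExts E τ)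

namespace IsKPFamily

variable (hF : Λ.IsKPFamily S T) (hΛ : Λ.FinitelyAligned) (hE : IsMCEClosed (E : Set Λ.Path))
include hF hΛ hE

theorem mul_S_mul_T_mem_extSpan {σ τ τ' : Λ.Path} (hs : Λ.src σ = Λ.src τ) (hτ' : τ' ∈ E)
    {w : B} (hw : w ∈ extSpan R S T E σ τ) : w * (S τ' * T τ') ∈ extSpan R S T E σ τ := by
  induction hw using Submodule.span_induction with
  | mem _ hb =>
    obtain ⟨ω, ⟨h₁, h₂, h₃⟩, rfl⟩ := hb
    have hσω : Λ.src σ = Λ.rng ω := hs.trans h₁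
    rw [hF.S_mul_T_mul_S_mul_T hΛ (by rw [Λ.src_comp _ _ hσω, Λ.src_comp _ _ h₁]) rfl]
    refine Submodule.sum_mem _ fun x hx => ?_
    have hx' := (Set.Finite.mem_toFinset _).1 hx
    obtain ⟨hx₁, -, hx₃, -⟩ := id hx'
    have hωx : Λ.src ω = Λ.rng x.1 := (Λ.src_comp _ _ h₁).symm.trans hx₁
    refine Submodule.subset_span ⟨Λ.comp ω x.1, ⟨?_, ?_, ?_⟩, ?_⟩
    · rw [Λ.rng_comp _ _ hωx]
      exact h₁
    · rw [Λ.deg_comp _ _ hωx]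
      exact fun h0 => h₂ (add_eq_zero.1 h0).1
    · rw [← Λ.comp_assoc _ _ _ h₁ hωx]
      exact hE _ h₃ _ hτ' (comp_mem_MCE hx')
    · dsimp only
      rw [← Λ.comp_assoc _ _ _ hσω hωx, ← Λ.comp_assoc _ _ _ h₁ hωx, hx₃]
  | zero => rw [zero_mul]; exact zero_mem _
  | add _ _ _ _ hx hy => rw [add_mul]; exact add_mem hx hy
  | smul r _ _ hx => rw [smul_mul_assoc]; exact Submodule.smul_mem _ r hx

theorem S_mul_gapProd_mul_T_sub_mem_extSpan {σ τ : Λ.Path} (hs : Λ.src σ = Λ.src τ)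
    (l : List Λ.Path) (hl : ∀ ν ∈ l, ν ∈ properExts E τ) :
    S σ * gapProd (S (Λ.vertex (Λ.src τ))) (l.map fun ν => S ν * T ν) * T τ - S σ * T τ ∈
      extSpan R S T E σ τ := by
  induction l using List.reverseRecOn with
  | nil =>
    rw [List.map_nil, gapProd, List.foldl_nil, hF.S_mul_S_vertex hs, sub_self]
    exact zero_mem _
  | append_singleton l ν ih =>
    obtain ⟨hν₁, -, hν₃⟩ := hl ν (by simp)
    set X := S σ * gapProd (S (Λ.vertex (Λ.src τ))) (l.map fun ν => S ν * T ν) * T τ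
    set e := S (Λ.comp τ ν) * T (Λ.comp τ ν)
    have hX : S σ * gapProd (S (Λ.vertex (Λ.src τ))) ((l ++ [ν]).map fun ν => S ν * T ν) * T τ =
        X - X * e := by
      have hfactor : (S (Λ.vertex (Λ.src τ)) - S ν * T ν) * T τ = T τ - T τ * e := by
        rw [sub_mul, hF.S_vertex_mul_T rfl, mul_assoc, hF.T_comp hν₁, ← mul_assoc,
          hF.T_mul_S_comp hν₁]
      rw [List.map_append, List.map_singleton, gapProd_append_singleton, mul_assoc (S σ),
        mul_assoc, hfactor]
      simp only [X, mul_assoc, mul_sub]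
    have hXe : S σ * T τ * e = S (Λ.comp σ ν) * T (Λ.comp τ ν) := by
      rw [mul_assoc, ← mul_assoc (T τ), hF.T_mul_S_comp hν₁, ← mul_assoc, hF.S_comp (hs.trans hν₁)]
    have hsplit : X - X * e - S σ * T τ =
        (X - S σ * T τ) - ((X - S σ * T τ) * e + S σ * T τ * e) := by
      noncomm_ring
    have ih' := ih fun μ hμ => hl μ (by simp [hμ])
    rw [hX, hsplit, hXe]
    exact sub_mem ih' (add_mem (hF.mul_S_mul_T_mem_extSpan hΛ hE hs hν₃ ih')
      (Submodule.subset_span ⟨ν, hl ν (by simp), rfl⟩))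

theorem S_mul_T_mem_thetaSpan {σ τ : Λ.Path} (hτ : τ ∈ E) (hd : Λ.deg σ = Λ.deg τ)
    (hs : Λ.src σ = Λ.src τ) : S σ * T τ ∈ thetaSpan R S T E := by
  have hext : extSpan R S T E σ τ ≤ thetaSpan R S T E := by
    refine Submodule.span_le.2 ?_
    rintro _ ⟨ω, hω, rfl⟩
    have hσω : Λ.src σ = Λ.rng ω := hs.trans hω.1
    exact S_mul_T_mem_thetaSpan hω.2.2
      (by rw [Λ.deg_comp _ _ hσω, Λ.deg_comp _ _ hω.1, hd])
      (by rw [Λ.src_comp _ _ hσω, Λ.src_comp _ _ hω.1])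
  have htheta : theta S T E σ τ ∈ thetaSpan R S T E :=
    Submodule.subset_span ⟨(σ, τ), ⟨hd, hs, hτ⟩, rfl⟩
  have hdiff : theta S T E σ τ - S σ * T τ ∈ extSpan R S T E σ τ :=
    hF.S_mul_gapProd_mul_T_sub_mem_extSpan hΛ hE hs _ fun ν hν => mem_properExtList.1 hν
  rw [← sub_sub_cancel (theta S T E σ τ) (S σ * T τ)]
  exact sub_mem htheta (hext hdiff)
termination_by E.sup Λ.degSum - Λ.degSum τ
decreasing_by
  have hlen := degSum_comp hω.1
  have hpos : 0 < Λ.degSum ω := Nat.pos_of_ne_zero fun h => hω.2.1 (degSum_eq_zero.1 h)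
  have hle : Λ.degSum (Λ.comp τ ω) ≤ E.sup Λ.degSum := Finset.le_sup hω.2.2
  omega

end IsKPFamily

theorem IsKPFamily.exists_finset_forall_mem_thetaSpan (hF : Λ.IsKPFamily S T)
    (hΛ : Λ.FinitelyAligned) {a : B} (ha : a ∈ kpCore Λ R S T) :
    ∃ F : Finset Λ.Path, ∀ E : Finset Λ.Path, F ⊆ E → IsMCEClosed (E : Set Λ.Path) →
      a ∈ thetaSpan R S T E := by
  classical
  induction ha using Submodule.span_induction with
  | mem _ hb =>
    obtain ⟨p, q, hd, rfl⟩ := hb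
    refine ⟨{q}, fun E hqE hE => ?_⟩
    by_cases hs : Λ.src p = Λ.src q
    · exact hF.S_mul_T_mem_thetaSpan hΛ hE (hqE (Finset.mem_singleton_self q)) hd hs
    · rw [hF.S_mul_T_eq_zero_of_src_ne hs]
      exact zero_mem _
  | zero => exact ⟨∅, fun _ _ _ => zero_mem _⟩
  | add _ _ _ _ hx hy =>
    obtain ⟨F₁, h₁⟩ := hx
    obtain ⟨F₂, h₂⟩ := hy
    exact ⟨F₁ ∪ F₂, fun E hE hc => add_mem (h₁ E (Finset.union_subset_left hE) hc)
      (h₂ E (Finset.union_subset_right hE) hc)⟩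
  | smul r _ _ hx =>
    obtain ⟨F, h⟩ := hx
    exact ⟨F, fun E hE hc => Submodule.smul_mem _ r (h E hE hc)⟩

end Expansion

end KGraph

theorem injective_on_core_general {k : ℕ} (Λ : KGraph k)
    (hΛ : Λ.FinitelyAligned) (R : Type) [CommRing R]
    (B : Type) [NonUnitalRing B] [Module R B] [SMulCommClass R B B]
    [IsScalarTower R B B] (s t : Λ.Path → B)
    (hU : Λ.IsUniversalKP R B s t)
    (A : Type) [NonUnitalRing A] [Module R A] (π : B →ₙₐ[R] A)
    (hπv : ∀ r : R, r ≠ 0 → ∀ v, π (r • s (Λ.vertex v)) ≠ 0) :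
    Set.InjOn π (kpCore Λ R s t : Set B) := by
  have hker : ∀ a ∈ kpCore Λ R s t, π a = 0 → a = 0 := by
    intro a ha hπa
    obtain ⟨F, hF⟩ := hU.1.exists_finset_forall_mem_thetaSpan hΛ ha
    obtain ⟨E, hFE, hE⟩ := KGraph.exists_finset_superset_isMCEClosed hΛ F
    exact hU.1.eq_zero_of_mem_thetaSpan hΛ hE π hπv (hF E hFE hE) hπa
  intro x hx y hy hxy
  exact sub_eq_zero.1 (hker _ (sub_mem hx hy) (by rw [map_sub, hxy, sub_self]))

/-- a homomorphism out of `KP_R(Λ)` which is nonzero on all `r • s_v`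
is injective on the core `KP_R(Λ)_0`. -/
theorem injective_on_core {k : ℕ} (hk : 0 < k) (Λ : KGraph k)
    (hΛ : Λ.FinitelyAligned) (R : Type) [CommRing R]
    (B : Type) [NonUnitalRing B] [Module R B] [SMulCommClass R B B]
    [IsScalarTower R B B] (s t : Λ.Path → B)
    (hU : Λ.IsUniversalKP R B s t)
    (A : Type) [NonUnitalRing A] [Module R A] [SMulCommClass R A A]
    [IsScalarTower R A A] (π : B →ₙₐ[R] A)
    (hπv : ∀ r : R, r ≠ 0 → ∀ v, π (r • s (Λ.vertex v)) ≠ 0) :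
    Set.InjOn π (kpCore Λ R s t : Set B) :=
  injective_on_core_general Λ hΛ R B s t hU A π hπv
end

section
/- Let k be a positive integer and Λ a finitely aligned k-graph with boundary-path groupoid G_Λ. Let (λ,μ), (λ',μ') ∈ Λ *_s Λ, let G ⊆ s(λ)Λ and G' ⊆ s(λ')Λ, and set F := Λ^min(λ,λ') ∩ Λ^min(μ,μ'). Then Z(λ *_s μ \ G) ∩ Z(λ' *_s μ' \ G') = ⊔_{(γ,γ') ∈ F} Z(λγ *_s μ'γ' \ [Ext(γ;G) ∪ Ext(γ';G')]), and the sets on the right-hand side are pairwise disjoint. -/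
/-!
A triple `(x, m, y)` lies in `Z(p *ₛ q)` when `x ∈ Z(p)`, `y ∈ Z(q)` and the tails
`σ^{d p} x`, `σ^{d q} y` coincide. For such a triple, membership in `Z(pν *ₛ qν)` depends on
`x` alone (it means `x ∈ Z(pν)`), and conversely `Z(pν *ₛ qν) ⊆ Z(p *ₛ q)`, because a boundary
path is determined by an initial segment together with the tail after it. So everything reduces
to cylinder sets, where `Z(p) ∩ Z(q)` is the disjoint union of the `Z(pρ)` over
`(ρ, τ) ∈ Λ^min(p, q)`, cut out by `x(0, d p ∨ d q)`.

For `(x, m, y)` in both basic sets this gives `(γ, γ') ∈ Λ^min(a, a')` with `x ∈ Z(aγ)`; the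
coincidence of tails then puts `y` in `Z(bγ) ∩ Z(b'γ')` at equal degrees, so `bγ = b'γ'` and
`(γ, γ') ∈ Λ^min(b, b')`. Finally, removing `Z(aμ *ₛ bμ)` for `μ ∈ G` amounts to removing
`Z(aγν *ₛ bγν)` for `ν ∈ Ext(γ; G)`, since `Λ^min(aγ, aμ) = Λ^min(γ, μ)`.
-/

theorem Pi.add_sup_add_left {ι : Type*} (a b c : ι → ℕ) : (a + b) ⊔ (a + c) = a + b ⊔ c := by
  funext i
  simp only [Pi.add_apply, Pi.sup_apply]
  omega

namespace ENat

theorem natCast_le_sub_iff {d : ℕ∞} {m n : ℕ} (h : (n : ℕ∞) ≤ d) :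
    (m : ℕ∞) ≤ d - n ↔ ((n + m : ℕ) : ℕ∞) ≤ d := by
  rw [Nat.cast_add]
  exact (addLECancellable_natCast n).le_tsub_iff_left h

theorem sub_natCast_add_add {d : ℕ∞} {a b : ℕ} (h : ((a + b : ℕ) : ℕ∞) ≤ d) :
    d - (a + b : ℕ) + b = d - a := by
  have ha : (a : ℕ∞) ≤ d := (Nat.cast_le.2 (Nat.le_add_right a b)).trans h
  rw [Nat.cast_add, ← tsub_tsub, tsub_add_cancel_of_le]
  exact (natCast_le_sub_iff ha).2 h

end ENat

namespace KGraph

variable {k : ℕ} {Λ : KGraph k}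

theorem eq_of_comp_eq_comp {p q p' q' : Λ.Path} (h : Λ.src p = Λ.rng q)
    (h' : Λ.src p' = Λ.rng q') (hd : Λ.deg p = Λ.deg p')
    (he : Λ.comp p q = Λ.comp p' q') : p = p' ∧ q = q' := by
  have hdq : Λ.deg q = Λ.deg q' := by
    have := Λ.deg_comp p q h
    rw [he, Λ.deg_comp p' q' h', hd] at this
    exact (add_left_cancel this).symm
  obtain ⟨_, -, huniq⟩ :=
    Λ.factorisation (Λ.comp p q) (Λ.deg p) (Λ.deg q) (Λ.deg_comp p q h)
  exact Prod.ext_iff.1 <| (huniq (p, q) ⟨h, rfl, rfl, rfl⟩).trans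
    (huniq (p', q') ⟨h', hd.symm, hdq.symm, he.symm⟩).symm

theorem comp_left_cancel {p q q' : Λ.Path} (h : Λ.src p = Λ.rng q) (h' : Λ.src p = Λ.rng q')
    (he : Λ.comp p q = Λ.comp p q') : q = q' :=
  (eq_of_comp_eq_comp h h' rfl he).2

theorem minPairs_comp_comp {a γ μ : Λ.Path} (hγ : Λ.src a = Λ.rng γ)
    (hμ : Λ.src a = Λ.rng μ) :
    Λ.minPairs (Λ.comp a γ) (Λ.comp a μ) = Λ.minPairs γ μ := by
  ext ⟨ν, t⟩
  simp only [minPairs, Set.mem_ofPred_eq, Λ.src_comp _ _ hγ, Λ.src_comp _ _ hμ]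
  refine and_congr_right fun hν => and_congr_right fun ht => ?_
  have hγν : Λ.src a = Λ.rng (Λ.comp γ ν) := by rw [Λ.rng_comp _ _ hν, hγ]
  have hμt : Λ.src a = Λ.rng (Λ.comp μ t) := by rw [Λ.rng_comp _ _ ht, hμ]
  rw [Λ.comp_assoc _ _ _ hγ hν, Λ.comp_assoc _ _ _ hμ ht, Λ.deg_comp _ _ hγν,
    Λ.deg_comp _ _ hγ, Λ.deg_comp _ _ hμ, Pi.add_sup_add_left, add_right_inj]
  exact and_congr_left fun _ => ⟨comp_left_cancel hγν hμt, congrArg _⟩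

theorem mem_minPairs_of_comp_eq_comp {a a' b b' γ γ' : Λ.Path}
    (hγ : (γ, γ') ∈ Λ.minPairs a a') (hb : Λ.src b = Λ.rng γ) (hb' : Λ.src b' = Λ.rng γ')
    (he : Λ.comp b γ = Λ.comp b' γ') : (γ, γ') ∈ Λ.minPairs b b' := by
  obtain ⟨ha, ha', hae, hdeg⟩ := hγ
  refine ⟨hb, hb', he, ?_⟩
  have hdeg' := hdeg
  rw [hae] at hdeg'
  have hbe := congrArg Λ.deg he
  rw [Λ.deg_comp _ _ ha] at hdeg
  rw [Λ.deg_comp _ _ ha'] at hdeg'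
  rw [Λ.deg_comp _ _ hb, Λ.deg_comp _ _ hb'] at hbe
  rw [Λ.deg_comp _ _ hb]
  funext i
  have h₁ := congrFun hdeg i
  have h₂ := congrFun hdeg' i
  have h₃ := congrFun hbe i
  simp only [Pi.add_apply, Pi.sup_apply] at h₁ h₂ h₃ ⊢
  -- `d a + d γ = d a' + d γ' = d a ∨ d a'` forces `d γ i = 0` or `d γ' i = 0`
  omega

namespace BoundaryPath

def InDom (x : Λ.BoundaryPath) (n : Fin k → ℕ) : Prop :=
  ∀ i, (n i : ℕ∞) ≤ x.deg i

variable {x y : Λ.BoundaryPath}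

theorem InDom.mono {m n : Fin k → ℕ} (hn : x.InDom n) (hmn : m ≤ n) : x.InDom m :=
  fun i => (Nat.cast_le.2 (hmn i)).trans (hn i)

theorem InDom.sup {m n : Fin k → ℕ} (hm : x.InDom m) (hn : x.InDom n) : x.InDom (m ⊔ n) :=
  fun i => by
    rcases le_total (m i) (n i) with h | h
    · simpa [h] using hn i
    · simpa [h] using hm i

theorem deg_seg_add {P t : Fin k → ℕ} (h : x.InDom (P + t)) :
    Λ.deg (x.seg P (P + t)) = t := by
  rw [x.deg_seg P (P + t) le_self_add h, add_tsub_cancel_left]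

theorem seg_eq_and_seg_eq_of_seg_eq {P Q W r : Fin k → ℕ} (hx : x.InDom (P + W))
    (hy : y.InDom (Q + W)) (hrW : r ≤ W) (h : x.seg P (P + W) = y.seg Q (Q + W)) :
    x.seg P (P + r) = y.seg Q (Q + r) ∧ x.seg (P + r) (P + W) = y.seg (Q + r) (Q + W) := by
  have hPr : P + r ≤ P + W := add_le_add_right hrW P
  have hQr : Q + r ≤ Q + W := add_le_add_right hrW Q
  refine eq_of_comp_eq_comp (x.src_seg _ _ _ le_self_add hPr hx)
    (y.src_seg _ _ _ le_self_add hQr hy) ?_ ?_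
  · rw [deg_seg_add (hx.mono hPr), deg_seg_add (hy.mono hQr)]
  · rw [x.comp_seg _ _ _ le_self_add hPr hx, y.comp_seg _ _ _ le_self_add hQr hy, h]

theorem seg_add_eq_of_seg_add_eq {P Q W r s : Fin k → ℕ} (hx : x.InDom (P + W))
    (hy : y.InDom (Q + W)) (hrs : r ≤ s) (hsW : s ≤ W)
    (h : x.seg P (P + W) = y.seg Q (Q + W)) :
    x.seg (P + r) (P + s) = y.seg (Q + r) (Q + s) := by
  have hW : ∀ R : Fin k → ℕ, R + W = R + r + (W - r) := fun R => by
    rw [add_assoc, add_tsub_cancel_of_le (hrs.trans hsW)]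
  have hs : ∀ R : Fin k → ℕ, R + s = R + r + (s - r) := fun R => by
    rw [add_assoc, add_tsub_cancel_of_le hrs]
  have htail := (seg_eq_and_seg_eq_of_seg_eq hx hy (hrs.trans hsW) h).2
  rw [hW P, hW Q] at htail
  rw [hW P] at hx
  rw [hW Q] at hy
  rw [hs P, hs Q]
  exact (seg_eq_and_seg_eq_of_seg_eq hx hy (tsub_le_tsub_right hsW r) htail).1

def shift (x : Λ.BoundaryPath) (n : Fin k → ℕ) (hn : x.InDom n) : Λ.BoundaryPath where
  deg i := x.deg i - n i
  seg p q := x.seg (n + p) (n + q)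
  deg_seg p q hpq hq := by
    rw [x.deg_seg (n + p) (n + q) (add_le_add_right hpq n)
      fun i => (ENat.natCast_le_sub_iff (hn i)).1 (hq i), add_tsub_add_eq_tsub_left]
  seg_self p hp := x.seg_self _ fun i => (ENat.natCast_le_sub_iff (hn i)).1 (hp i)
  src_seg p q r hpq hqr hr := x.src_seg _ _ _ (add_le_add_right hpq n) (add_le_add_right hqr n)
    fun i => (ENat.natCast_le_sub_iff (hn i)).1 (hr i)
  comp_seg p q r hpq hqr hr := x.comp_seg _ _ _ (add_le_add_right hpq n) (add_le_add_right hqr n)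
    fun i => (ENat.natCast_le_sub_iff (hn i)).1 (hr i)
  boundary m hm E hE := by
    obtain ⟨p, hpE, hp, hseg⟩ :=
      x.boundary (n + m) (fun i => (ENat.natCast_le_sub_iff (hn i)).1 (hm i)) E hE
    refine ⟨p, hpE, fun i => (ENat.natCast_le_sub_iff (hn i)).2 ?_, ?_⟩
    · simpa only [Pi.add_apply, add_assoc] using hp i
    · rw [← add_assoc, hseg]

end BoundaryPath

namespace IsShift

variable {m n P Q u : Fin k → ℕ} {x y z z' : Λ.BoundaryPath}

theorem inDom_iff_of_deg_eq (hn : x.InDom n) (hd : ∀ i, z.deg i = x.deg i - n i) :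
    z.InDom m ↔ x.InDom (n + m) :=
  forall_congr' fun i => by rw [hd i]; exact ENat.natCast_le_sub_iff (hn i)

theorem inDom_iff (h : Λ.IsShift n x z) : z.InDom m ↔ x.InDom (n + m) :=
  inDom_iff_of_deg_eq h.1 h.2.1

theorem seg_zero (h : Λ.IsShift n x z) {s : Fin k → ℕ} (hs : z.InDom s) :
    z.seg 0 s = x.seg n (n + s) := by
  simpa only [add_zero] using h.2.2 0 s zero_le hs

theorem trans (hxy : Λ.IsShift m x y) (hyz : Λ.IsShift n y z) : Λ.IsShift (m + n) x z := by
  refine ⟨hxy.inDom_iff.1 hyz.1, fun i => ?_, fun p q hpq hq => ?_⟩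
  · rw [hyz.2.1 i, hxy.2.1 i, tsub_tsub, Pi.add_apply, Nat.cast_add]
  · rw [hyz.2.2 p q hpq hq, hxy.2.2 _ _ (add_le_add_right hpq n) (hyz.inDom_iff.1 hq),
      add_assoc, add_assoc]

theorem exists_of_inDom (h : x.InDom n) : ∃ z, Λ.IsShift n x z :=
  ⟨x.shift n h, h, fun _ => rfl, fun _ _ _ _ => rfl⟩

theorem seg_add_eq_of_seg_eq (hx : Λ.IsShift (P + u) x z') (hy : Λ.IsShift (Q + u) y z')
    (hseg : x.seg P (P + u) = y.seg Q (Q + u)) {W : Fin k → ℕ} (huW : u ≤ W)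
    (hW : z'.InDom (W - u)) : x.seg P (P + W) = y.seg Q (Q + W) := by
  have hPW : P + W = P + u + (W - u) := by rw [add_assoc, add_tsub_cancel_of_le huW]
  have hQW : Q + W = Q + u + (W - u) := by rw [add_assoc, add_tsub_cancel_of_le huW]
  rw [hPW, hQW, ← x.comp_seg _ _ _ le_self_add le_self_add (hx.inDom_iff.1 hW),
    ← y.comp_seg _ _ _ le_self_add le_self_add (hy.inDom_iff.1 hW), ← hx.seg_zero hW,
    ← hy.seg_zero hW, hseg]

theorem of_add (hz : Λ.IsShift P x z) (hx : Λ.IsShift (P + u) x z')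
    (hy : Λ.IsShift (Q + u) y z') (hseg : x.seg P (P + u) = y.seg Q (Q + u)) :
    Λ.IsShift Q y z := by
  have hQ : y.InDom Q := BoundaryPath.InDom.mono hy.1 le_self_add
  have hdeg : ∀ i, z.deg i = y.deg i - Q i := fun i => by
    rw [hz.2.1 i, ← ENat.sub_natCast_add_add (hx.1 i), ← ENat.sub_natCast_add_add (hy.1 i)]
    exact congrArg (· + (u i : ℕ∞)) ((hx.2.1 i).symm.trans (hy.2.1 i))
  refine ⟨hQ, hdeg, fun r s hrs hs => ?_⟩
  have hzu : z.InDom u := hz.inDom_iff.2 hx.1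
  have hzW : z.InDom (s ⊔ u) := BoundaryPath.InDom.sup hs hzu
  rw [hz.2.2 r s hrs hs]
  -- both sides are windows of the segments of length `s ⊔ u`, which agree
  refine BoundaryPath.seg_add_eq_of_seg_add_eq (hz.inDom_iff.1 hzW)
    ((inDom_iff_of_deg_eq hQ hdeg).1 hzW) hrs le_sup_left
    (seg_add_eq_of_seg_eq hx hy hseg le_sup_right (hx.inDom_iff.2 ?_))
  rw [add_assoc, add_tsub_cancel_of_le le_sup_right]
  exact hz.inDom_iff.1 hzW

end IsShift

variable {p q ν : Λ.Path} {x : Λ.BoundaryPath}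

theorem mem_ZC_iff : x ∈ Λ.ZC p ↔ x.InDom (Λ.deg p) ∧ x.seg 0 (Λ.deg p) = p :=
  ⟨fun ⟨_, hz, hseg⟩ => ⟨hz.1, hseg⟩, fun ⟨h, hseg⟩ =>
    let ⟨z, hz⟩ := IsShift.exists_of_inDom h; ⟨z, hz, hseg⟩⟩

theorem eq_of_mem_ZC (hp : x ∈ Λ.ZC p) (hq : x ∈ Λ.ZC q) (hd : Λ.deg p = Λ.deg q) : p = q := by
  rw [← (mem_ZC_iff.1 hp).2, ← (mem_ZC_iff.1 hq).2, hd]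

theorem mem_ZC_comp_iff (h : Λ.src p = Λ.rng ν) :
    x ∈ Λ.ZC (Λ.comp p ν) ↔ x ∈ Λ.ZC p ∧ x.InDom (Λ.deg p + Λ.deg ν) ∧
      x.seg (Λ.deg p) (Λ.deg p + Λ.deg ν) = ν := by
  rw [mem_ZC_iff, mem_ZC_iff, Λ.deg_comp _ _ h]
  constructor
  · rintro ⟨hdom, hseg⟩
    obtain ⟨hp, hν⟩ := eq_of_comp_eq_comp (x.src_seg 0 _ _ zero_le le_self_add hdom) h
      (by rw [x.deg_seg 0 _ zero_le (hdom.mono le_self_add), tsub_zero])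
      (by rw [x.comp_seg 0 _ _ zero_le le_self_add hdom, hseg])
    exact ⟨⟨hdom.mono le_self_add, hp⟩, hdom, hν⟩
  · rintro ⟨⟨-, hp⟩, hdom, hν⟩
    exact ⟨hdom, by rw [← x.comp_seg 0 _ _ zero_le le_self_add hdom, hp, hν]⟩

theorem ZC_inter_ZC (p q : Λ.Path) :
    Λ.ZC p ∩ Λ.ZC q = ⋃ r ∈ Λ.minPairs p q, Λ.ZC (Λ.comp p r.1) := by
  ext x
  simp only [Set.mem_inter_iff, Set.mem_iUnion, exists_prop]
  constructor
  · rintro ⟨hp, hq⟩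
    rw [mem_ZC_iff] at hp hq
    have hn : x.InDom (Λ.deg p ⊔ Λ.deg q) := hp.1.sup hq.1
    have hρ := x.comp_seg 0 _ _ zero_le le_sup_left hn
    have hτ := x.comp_seg 0 _ _ zero_le le_sup_right hn
    have hdeg : Λ.deg (x.seg 0 (Λ.deg p ⊔ Λ.deg q)) = Λ.deg p ⊔ Λ.deg q := by
      rw [x.deg_seg 0 _ zero_le hn, tsub_zero]
    rw [hp.2] at hρ
    rw [hq.2] at hτ
    refine ⟨(x.seg (Λ.deg p) (Λ.deg p ⊔ Λ.deg q), x.seg (Λ.deg q) (Λ.deg p ⊔ Λ.deg q)),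
      ⟨?_, ?_, hρ.trans hτ.symm, by rw [hρ, hdeg]⟩, mem_ZC_iff.2 ⟨?_, ?_⟩⟩
    · simpa only [hp.2] using x.src_seg 0 _ _ zero_le le_sup_left hn
    · simpa only [hq.2] using x.src_seg 0 _ _ zero_le le_sup_right hn
    · rwa [hρ, hdeg]
    · rw [hρ, hdeg]
  · rintro ⟨⟨ρ, τ⟩, ⟨hρ, hτ, he, -⟩, hx⟩
    exact ⟨((mem_ZC_comp_iff hρ).1 hx).1, ((mem_ZC_comp_iff hτ).1 (he ▸ hx)).1⟩

theorem minPairs_eq_of_mem_ZC {r s : Λ.Path × Λ.Path} (hr : r ∈ Λ.minPairs p q)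
    (hs : s ∈ Λ.minPairs p q) (hxr : x ∈ Λ.ZC (Λ.comp p r.1))
    (hxs : x ∈ Λ.ZC (Λ.comp p s.1)) : r = s := by
  have hp : Λ.comp p r.1 = Λ.comp p s.1 := eq_of_mem_ZC hxr hxs (by rw [hr.2.2.2, hs.2.2.2])
  refine Prod.ext (comp_left_cancel hr.1 hs.1 hp) (comp_left_cancel hr.2.1 hs.2.1 ?_)
  rw [← hr.2.2.1, ← hs.2.2.1, hp]

theorem deg_sub_deg_comp (hp : Λ.src p = Λ.rng ν) (hq : Λ.src q = Λ.rng ν) :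
    (fun i => (Λ.deg (Λ.comp p ν) i : ℤ) - Λ.deg (Λ.comp q ν) i) =
      fun i => (Λ.deg p i : ℤ) - Λ.deg q i := by
  funext i
  rw [Λ.deg_comp _ _ hp, Λ.deg_comp _ _ hq, Pi.add_apply, Pi.add_apply]
  push_cast
  ring

variable {w : Λ.BoundaryPath × (Fin k → ℤ) × Λ.BoundaryPath}

theorem mem_ZP_comp_iff (hp : Λ.src p = Λ.rng ν) (hq : Λ.src q = Λ.rng ν)
    (hw : w ∈ Λ.ZP p q) : w ∈ Λ.ZP (Λ.comp p ν) (Λ.comp q ν) ↔ w.1 ∈ Λ.ZC (Λ.comp p ν) := by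
  refine ⟨fun h => h.2.1, fun hx => ?_⟩
  obtain ⟨hm, -, hyq, z, hxz, hyz⟩ := hw
  obtain ⟨-, hdom, hν⟩ := (mem_ZC_comp_iff hp).1 hx
  have hzν : z.InDom (Λ.deg ν) := hxz.inDom_iff.2 hdom
  obtain ⟨z', hz'⟩ := IsShift.exists_of_inDom hzν
  refine ⟨hm.trans (deg_sub_deg_comp hp hq).symm, hx,
    (mem_ZC_comp_iff hq).2 ⟨hyq, hyz.inDom_iff.1 hzν, ?_⟩, z', ?_, ?_⟩
  · rw [← hyz.seg_zero hzν, hxz.seg_zero hzν, hν]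
  · rw [Λ.deg_comp _ _ hp]
    exact hxz.trans hz'
  · rw [Λ.deg_comp _ _ hq]
    exact hyz.trans hz'

theorem mem_ZP_of_mem_ZP_comp (hp : Λ.src p = Λ.rng ν) (hq : Λ.src q = Λ.rng ν)
    (hw : w ∈ Λ.ZP (Λ.comp p ν) (Λ.comp q ν)) : w ∈ Λ.ZP p q := by
  obtain ⟨hm, hx, hy, z', hxz', hyz'⟩ := hw
  obtain ⟨hxp, -, hxν⟩ := (mem_ZC_comp_iff hp).1 hx
  obtain ⟨hyq, -, hyν⟩ := (mem_ZC_comp_iff hq).1 hy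
  obtain ⟨z, hz⟩ := IsShift.exists_of_inDom (mem_ZC_iff.1 hxp).1
  rw [Λ.deg_comp _ _ hp] at hxz'
  rw [Λ.deg_comp _ _ hq] at hyz'
  exact ⟨hm.trans (deg_sub_deg_comp hp hq), hxp, hyq, z, hz,
    hz.of_add hxz' hyz' (hxν.trans hyν.symm)⟩

theorem mem_ZP_comp_iff_exists_minPairs {γ μ : Λ.Path} (hγp : Λ.src p = Λ.rng γ)
    (hγq : Λ.src q = Λ.rng γ) (hμp : Λ.src p = Λ.rng μ) (hμq : Λ.src q = Λ.rng μ)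
    (hw : w ∈ Λ.ZP (Λ.comp p γ) (Λ.comp q γ)) :
    w ∈ Λ.ZP (Λ.comp p μ) (Λ.comp q μ) ↔ ∃ ν t, (ν, t) ∈ Λ.minPairs γ μ ∧
      w ∈ Λ.ZP (Λ.comp (Λ.comp p γ) ν) (Λ.comp (Λ.comp q γ) ν) := by
  have hcyl := Set.ext_iff.1 (ZC_inter_ZC (Λ.comp p γ) (Λ.comp p μ)) w.1
  rw [minPairs_comp_comp hγp hμp] at hcyl
  simp only [Set.mem_inter_iff, Set.mem_iUnion, exists_prop, Prod.exists] at hcyl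
  have hext : ∀ ν t, (ν, t) ∈ Λ.minPairs γ μ →
      (w ∈ Λ.ZP (Λ.comp (Λ.comp p γ) ν) (Λ.comp (Λ.comp q γ) ν) ↔
        w.1 ∈ Λ.ZC (Λ.comp (Λ.comp p γ) ν)) := fun ν t h =>
    mem_ZP_comp_iff (by rw [Λ.src_comp _ _ hγp, h.1]) (by rw [Λ.src_comp _ _ hγq, h.1]) hw
  rw [mem_ZP_comp_iff hμp hμq (mem_ZP_of_mem_ZP_comp hγp hγq hw)]
  constructor
  · intro hxμ
    obtain ⟨ν, t, h, hx⟩ := hcyl.1 ⟨hw.2.1, hxμ⟩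
    exact ⟨ν, t, h, (hext ν t h).2 hx⟩
  · rintro ⟨ν, t, h, hwν⟩
    exact (hcyl.2 ⟨ν, t, h, (hext ν t h).1 hwν⟩).2

theorem mem_extSet_iff {γ : Λ.Path} {G : Set Λ.Path} :
    ν ∈ Λ.extSet γ G ↔ ∃ μ ∈ G, ∃ t, (ν, t) ∈ Λ.minPairs γ μ := by
  simp [extSet]

theorem mem_ZPD_iff_of_mem_ZP_comp {γ : Λ.Path} {G : Set Λ.Path} (hγp : Λ.src p = Λ.rng γ)
    (hγq : Λ.src q = Λ.rng γ) (hG : ∀ μ ∈ G, Λ.rng μ = Λ.src p)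
    (hw : w ∈ Λ.ZP (Λ.comp p γ) (Λ.comp q γ)) :
    w ∈ Λ.ZPD p q G ↔
      ∀ ν ∈ Λ.extSet γ G, w ∉ Λ.ZP (Λ.comp (Λ.comp p γ) ν) (Λ.comp (Λ.comp q γ) ν) := by
  have key : ∀ μ ∈ G, _ := fun μ hμ => mem_ZP_comp_iff_exists_minPairs hγp hγq (hG μ hμ).symm
    (hγq.trans (hγp.symm.trans (hG μ hμ).symm)) hw
  simp only [ZPD, Set.mem_sdiff, mem_ZP_of_mem_ZP_comp hγp hγq hw, true_and, Set.mem_iUnion,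
    not_exists, mem_extSet_iff]
  constructor
  · rintro h ν ⟨μ, hμ, t, hνt⟩ hwν
    exact h μ hμ ((key μ hμ).2 ⟨ν, t, hνt, hwν⟩)
  · intro h μ hμ hwμ
    obtain ⟨ν, t, hνt, hwν⟩ := (key μ hμ).1 hwμ
    exact h ν ⟨μ, hμ, t, hνt⟩ hwν

variable {a b a' b' γ γ' : Λ.Path}

theorem exists_minPairs_of_mem_ZP_inter (hab : Λ.src a = Λ.src b)
    (hab' : Λ.src a' = Λ.src b') (hw : w ∈ Λ.ZP a b) (hw' : w ∈ Λ.ZP a' b') :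
    ∃ γ γ', (γ, γ') ∈ Λ.minPairs a a' ∧ (γ, γ') ∈ Λ.minPairs b b' ∧
      w ∈ Λ.ZP (Λ.comp a γ) (Λ.comp b' γ') := by
  have hx : w.1 ∈ Λ.ZC a ∩ Λ.ZC a' := ⟨hw.2.1, hw'.2.1⟩
  rw [ZC_inter_ZC] at hx
  obtain ⟨⟨γ, γ'⟩, hγ, hxγ⟩ := Set.mem_iUnion₂.1 hx
  obtain ⟨ha, ha', he, -⟩ := id hγ
  have hwγ : w ∈ Λ.ZP (Λ.comp a γ) (Λ.comp b γ) := (mem_ZP_comp_iff ha (hab ▸ ha) hw).2 hxγ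
  have hwγ' : w ∈ Λ.ZP (Λ.comp a' γ') (Λ.comp b' γ') :=
    (mem_ZP_comp_iff ha' (hab' ▸ ha') hw').2 (he ▸ hxγ)
  have hb : Λ.comp b γ = Λ.comp b' γ' := by
    refine eq_of_mem_ZC hwγ.2.2.1 hwγ'.2.2.1 (funext fun i => ?_)
    have := congrFun (hwγ.1.symm.trans hwγ'.1) i
    rw [he] at this
    exact_mod_cast sub_right_injective this
  exact ⟨γ, γ', hγ, mem_minPairs_of_comp_eq_comp hγ (hab ▸ ha) (hab' ▸ ha') hb, hb ▸ hwγ⟩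

theorem mem_ZPD_inter_iff {G G' : Set Λ.Path} (hγa : (γ, γ') ∈ Λ.minPairs a a')
    (hγb : (γ, γ') ∈ Λ.minPairs b b') (hG : ∀ μ ∈ G, Λ.rng μ = Λ.src a)
    (hG' : ∀ μ ∈ G', Λ.rng μ = Λ.src a') (hw : w ∈ Λ.ZP (Λ.comp a γ) (Λ.comp b' γ')) :
    w ∈ Λ.ZPD a b G ∩ Λ.ZPD a' b' G' ↔
      w ∈ Λ.ZPD (Λ.comp a γ) (Λ.comp b' γ') (Λ.extSet γ G ∪ Λ.extSet γ' G') := by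
  obtain ⟨ha, ha', hae, -⟩ := hγa
  obtain ⟨hb, hb', hbe, -⟩ := hγb
  rw [Set.mem_inter_iff, mem_ZPD_iff_of_mem_ZP_comp ha hb hG (by rwa [hbe]),
    mem_ZPD_iff_of_mem_ZP_comp ha' hb' hG' (by rwa [← hae]), ← hae, hbe]
  simp only [ZPD, Set.mem_sdiff, hw, true_and, Set.mem_iUnion, Set.mem_union, not_exists,
    or_imp, forall_and]

end KGraph

theorem zset_intersection_general {k : ℕ} (Λ : KGraph k)
    (a b a' b' : Λ.Path) (hab : Λ.src a = Λ.src b) (hab' : Λ.src a' = Λ.src b')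
    (G G' : Set Λ.Path) (hG : ∀ ν ∈ G, Λ.rng ν = Λ.src a)
    (hG' : ∀ ν ∈ G', Λ.rng ν = Λ.src a') :
    (Λ.ZPD a b G ∩ Λ.ZPD a' b' G' =
      ⋃ x ∈ Λ.minPairs a a' ∩ Λ.minPairs b b',
        Λ.ZPD (Λ.comp a x.1) (Λ.comp b' x.2)
          (Λ.extSet x.1 G ∪ Λ.extSet x.2 G')) ∧
    ∀ x ∈ Λ.minPairs a a' ∩ Λ.minPairs b b',
      ∀ y ∈ Λ.minPairs a a' ∩ Λ.minPairs b b', x ≠ y →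
        Λ.ZPD (Λ.comp a x.1) (Λ.comp b' x.2)
            (Λ.extSet x.1 G ∪ Λ.extSet x.2 G') ∩
          Λ.ZPD (Λ.comp a y.1) (Λ.comp b' y.2)
            (Λ.extSet y.1 G ∪ Λ.extSet y.2 G') = ∅ := by
  refine ⟨Set.ext fun w => ⟨fun hw => ?_, fun hw => ?_⟩, ?_⟩
  · obtain ⟨γ, γ', hγa, hγb, hwγ⟩ :=
      KGraph.exists_minPairs_of_mem_ZP_inter hab hab' hw.1.1 hw.2.1
    exact Set.mem_biUnion (x := (γ, γ')) ⟨hγa, hγb⟩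
      ((KGraph.mem_ZPD_inter_iff hγa hγb hG hG' hwγ).1 hw)
  · obtain ⟨⟨γ, γ'⟩, ⟨hγa, hγb⟩, hwγ⟩ := Set.mem_iUnion₂.1 hw
    exact (KGraph.mem_ZPD_inter_iff hγa hγb hG hG' hwγ.1).2 hwγ
  · intro x hx y hy hne
    refine Set.eq_empty_of_forall_notMem fun w hw => hne ?_
    exact KGraph.minPairs_eq_of_mem_ZC hx.1 hy.1 hw.1.1.2.1 hw.2.1.2.1

/-- decomposition of the intersection of two basic sets of the
boundary-path groupoid as a disjoint union over
`F = Λ^min(a,a') ∩ Λ^min(b,b')`. -/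
theorem zset_intersection {k : ℕ} (hk : 0 < k) (Λ : KGraph k)
    (hΛ : Λ.FinitelyAligned)
    (a b a' b' : Λ.Path) (hab : Λ.src a = Λ.src b) (hab' : Λ.src a' = Λ.src b')
    (G G' : Set Λ.Path) (hG : ∀ ν ∈ G, Λ.rng ν = Λ.src a)
    (hG' : ∀ ν ∈ G', Λ.rng ν = Λ.src a') :
    (Λ.ZPD a b G ∩ Λ.ZPD a' b' G' =
      ⋃ x ∈ Λ.minPairs a a' ∩ Λ.minPairs b b',
        Λ.ZPD (Λ.comp a x.1) (Λ.comp b' x.2)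
          (Λ.extSet x.1 G ∪ Λ.extSet x.2 G')) ∧
    ∀ x ∈ Λ.minPairs a a' ∩ Λ.minPairs b b',
      ∀ y ∈ Λ.minPairs a a' ∩ Λ.minPairs b b', x ≠ y →
        Λ.ZPD (Λ.comp a x.1) (Λ.comp b' x.2)
            (Λ.extSet x.1 G ∪ Λ.extSet x.2 G') ∩
          Λ.ZPD (Λ.comp a y.1) (Λ.comp b' y.2)
            (Λ.extSet y.1 G ∪ Λ.extSet y.2 G') = ∅ :=
  zset_intersection_general Λ a b a' b' hab hab' G G' hG hG'
end
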